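/- Let G be a finite simple graph and X a vector field on G, regarded as the operator Xφ(i) = Σ_{darts u with π(u)=i} X(u)(φ(π₊(u)) − φ(π(u))) on C(G). Then X is self-adjoint with respect to the inner product on C(G) if and only if X̄ = X, and X is skew-adjoint if and only if both X̄ = −X and div X = 0. -/

import Mathlib

/-!
Write `⟨Xφ, ψ⟩ = Σ_u X(u) φ(π₊u) ψ(πu) - Σ_i (Σ_{πu = i} X(u)) φ(i) ψ(i)` and reverse the darts in
`⟨φ, Xψ⟩`: then `⟨Xφ, ψ⟩ ∓ ⟨φ, Xψ⟩` is the bilinear form with entries `X ∓ X̄` on darts and diagonal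
`0`, resp. `-2 Σ_{πu = i} X(u)`. A simple graph has no loops and at most one dart from `i` to `j`,
so testing on indicator functions shows that such a form vanishes iff its entries do. When
`X̄ = -X`, the diagonal `-2 Σ_{πu = i} X(u)` is exactly `div X`.
-/

open SimpleGraph Finset

variable {V : Type*} [Fintype V] [DecidableEq V]

/-- The gradient of a function `φ : V → ℝ`: the vector field `(∇φ)(u) = φ(π₊(u)) − φ(π(u))`. -/
def grad (G : SimpleGraph V) (φ : V → ℝ) : G.Dart → ℝ := fun u => φ u.snd - φ u.fst

/-- The divergence of a vector field: `(div X)(i) = Σ_{darts u with π(u)=i} (X(ū) − X(u))`. -/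
def divergence (G : SimpleGraph V) [DecidableRel G.Adj] (X : G.Dart → ℝ) : V → ℝ :=
  fun i => ∑ u ∈ Finset.univ.filter (fun u : G.Dart => u.fst = i), (X u.symm - X u)
/-- A vector field `X` regarded as a first order differential operator:
`Xφ(i) = Σ_{darts u with π(u)=i} X(u)(φ(π₊(u)) − φ(π(u)))`. -/
def fieldOp (G : SimpleGraph V) [DecidableRel G.Adj] (X : G.Dart → ℝ) (φ : V → ℝ) : V → ℝ :=
  fun i => ∑ u ∈ Finset.univ.filter (fun u : G.Dart => u.fst = i), X u * (φ u.snd - φ u.fst)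

section DartForm

variable (G : SimpleGraph V) [DecidableRel G.Adj]

def outSum (c : G.Dart → ℝ) (i : V) : ℝ :=
  ∑ u ∈ univ.filter (fun u : G.Dart => u.fst = i), c u

def dartForm (c : G.Dart → ℝ) (d : V → ℝ) (φ ψ : V → ℝ) : ℝ :=
  ∑ u : G.Dart, c u * φ u.snd * ψ u.fst + ∑ i, d i * φ i * ψ i

variable {G}

lemma sum_dart_mul_fst (c : G.Dart → ℝ) (f : V → ℝ) :
    ∑ u : G.Dart, c u * f u.fst = ∑ i, outSum G c i * f i := by
  rw [← sum_fiberwise univ (fun u : G.Dart => u.fst)]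
  refine sum_congr rfl fun i _ => ?_
  rw [outSum, sum_mul]
  exact sum_congr rfl fun u hu => by rw [(mem_filter.1 hu).2]

omit [DecidableEq V] in
lemma sum_dart_symm (f : G.Dart → ℝ) : ∑ u : G.Dart, f u.symm = ∑ u : G.Dart, f u :=
  Equiv.sum_comp (Dart.symm_involutive.toPerm _) f

omit [DecidableEq V] in
lemma dartForm_add (c c' : G.Dart → ℝ) (d d' : V → ℝ) (φ ψ : V → ℝ) :
    dartForm G (c + c') (d + d') φ ψ = dartForm G c d φ ψ + dartForm G c' d' φ ψ := by
  simp only [dartForm, Pi.add_apply, add_mul, sum_add_distrib]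
  ring

omit [DecidableEq V] in
lemma dartForm_sub (c c' : G.Dart → ℝ) (d d' : V → ℝ) (φ ψ : V → ℝ) :
    dartForm G (c - c') (d - d') φ ψ = dartForm G c d φ ψ - dartForm G c' d' φ ψ := by
  simp only [dartForm, Pi.sub_apply, sub_mul, sum_sub_distrib]
  ring

omit [DecidableEq V] in
lemma dartForm_swap (c : G.Dart → ℝ) (d : V → ℝ) (φ ψ : V → ℝ) :
    dartForm G c d ψ φ = dartForm G (c ∘ Dart.symm) d φ ψ := by
  simp only [dartForm, ← sum_dart_symm (fun u => c u * ψ u.snd * φ u.fst)]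
  congr 1
  · refine sum_congr rfl fun u _ => ?_
    simp only [Function.comp, Dart.symm_toProd, Prod.fst_swap, Prod.snd_swap]
    ring
  · exact sum_congr rfl fun i _ => by ring

lemma dartForm_single_single (c : G.Dart → ℝ) (d : V → ℝ) (u : G.Dart) :
    dartForm G c d (Pi.single u.snd 1) (Pi.single u.fst 1) = c u := by
  have h_off : ∀ v : G.Dart, c v * (Pi.single u.snd 1 : V → ℝ) v.snd *
      (Pi.single u.fst 1 : V → ℝ) v.fst = if v = u then c v else 0 := fun v => by
    by_cases hv : v = u
    · simp [hv]
    · obtain h | h : v.fst ≠ u.fst ∨ v.snd ≠ u.snd := by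
        rwa [Dart.ext_iff, Prod.ext_iff, not_and_or] at hv
      all_goals simp [hv, h]
  have h_diag : ∀ i, d i * (Pi.single u.snd 1 : V → ℝ) i * (Pi.single u.fst 1 : V → ℝ) i = 0 :=
    fun i => by
      rcases eq_or_ne i u.snd with rfl | h
      · simp [u.snd_ne_fst]
      · simp [h]
  simp only [dartForm, h_off, h_diag, sum_ite_eq', mem_univ, if_true, sum_const_zero, add_zero]

lemma dartForm_single_self (c : G.Dart → ℝ) (d : V → ℝ) (i : V) :
    dartForm G c d (Pi.single i 1) (Pi.single i 1) = d i := by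
  have h_off : ∀ v : G.Dart, c v * (Pi.single i 1 : V → ℝ) v.snd *
      (Pi.single i 1 : V → ℝ) v.fst = 0 := fun v => by
    rcases eq_or_ne v.fst i with rfl | h
    · simp [v.snd_ne_fst]
    · simp [h]
  simp only [dartForm, h_off, sum_const_zero, zero_add]
  rw [Fintype.sum_eq_single i fun j hj => by simp [hj]]
  simp

lemma dartForm_eq_zero_iff (c : G.Dart → ℝ) (d : V → ℝ) :
    (∀ φ ψ, dartForm G c d φ ψ = 0) ↔ c = 0 ∧ d = 0 := by
  refine ⟨fun h => ⟨funext fun u => ?_, funext fun i => ?_⟩, ?_⟩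
  · rw [← dartForm_single_single c d u, h, Pi.zero_apply]
  · rw [← dartForm_single_self c d i, h, Pi.zero_apply]
  · rintro ⟨rfl, rfl⟩ φ ψ
    simp [dartForm]

lemma sum_fieldOp_mul (X : G.Dart → ℝ) (φ ψ : V → ℝ) :
    ∑ i, fieldOp G X φ i * ψ i = dartForm G X (-outSum G X) φ ψ :=
  calc ∑ i, fieldOp G X φ i * ψ i = ∑ u : G.Dart, X u * (φ u.snd - φ u.fst) * ψ u.fst :=
        (sum_dart_mul_fst _ ψ).symm
    _ = ∑ u : G.Dart, X u * φ u.snd * ψ u.fst - ∑ i, outSum G X i * (φ i * ψ i) := by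
        rw [← sum_dart_mul_fst, ← sum_sub_distrib]
        exact sum_congr rfl fun u _ => by ring
    _ = dartForm G X (-outSum G X) φ ψ := by
        rw [dartForm, sub_eq_add_neg, ← sum_neg_distrib]
        congr 1
        exact sum_congr rfl fun i _ => by rw [Pi.neg_apply]; ring

lemma sum_mul_fieldOp (X : G.Dart → ℝ) (φ ψ : V → ℝ) :
    ∑ i, φ i * fieldOp G X ψ i = dartForm G (X ∘ Dart.symm) (-outSum G X) φ ψ := by
  rw [← dartForm_swap, ← sum_fieldOp_mul]
  exact sum_congr rfl fun i _ => mul_comm _ _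

lemma divergence_eq_neg_two_smul_outSum {X : G.Dart → ℝ} (hX : ∀ u, X u.symm = -X u) :
    divergence G X = (-2 : ℝ) • outSum G X := by
  ext i
  simp only [divergence, outSum, Pi.smul_apply, hX, smul_sum]
  exact sum_congr rfl fun u _ => by rw [smul_eq_mul]; ring

lemma sum_fieldOp_mul_sub_sum_mul_fieldOp (X : G.Dart → ℝ) (φ ψ : V → ℝ) :
    ∑ i, fieldOp G X φ i * ψ i - ∑ i, φ i * fieldOp G X ψ i =
      dartForm G (X - X ∘ Dart.symm) 0 φ ψ := by
  rw [sum_fieldOp_mul, sum_mul_fieldOp, ← dartForm_sub, sub_self]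

lemma sum_fieldOp_mul_add_sum_mul_fieldOp (X : G.Dart → ℝ) (φ ψ : V → ℝ) :
    ∑ i, fieldOp G X φ i * ψ i + ∑ i, φ i * fieldOp G X ψ i =
      dartForm G (X + X ∘ Dart.symm) ((-2 : ℝ) • outSum G X) φ ψ := by
  rw [sum_fieldOp_mul, sum_mul_fieldOp, ← dartForm_add]
  congr 1
  ext i
  simp only [Pi.add_apply, Pi.neg_apply, Pi.smul_apply, smul_eq_mul]
  ring

end DartForm

/-- `X` is self-adjoint iff `X̄ = X`, and `X` is skew-adjoint iff
`X̄ = −X` and `div X = 0`. -/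
theorem fieldOp_selfAdjoint_skewAdjoint_iff (G : SimpleGraph V) [DecidableRel G.Adj]
    (X : G.Dart → ℝ) :
    ((∀ φ ψ : V → ℝ, ∑ i : V, fieldOp G X φ i * ψ i = ∑ i : V, φ i * fieldOp G X ψ i) ↔
      (∀ u : G.Dart, X u.symm = X u)) ∧
    ((∀ φ ψ : V → ℝ, ∑ i : V, fieldOp G X φ i * ψ i = -∑ i : V, φ i * fieldOp G X ψ i) ↔
      ((∀ u : G.Dart, X u.symm = -X u) ∧ divergence G X = 0)) := by
  constructor
  · calc _ ↔ ∀ φ ψ, dartForm G (X - X ∘ Dart.symm) 0 φ ψ = 0 := by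
          simp_rw [← sum_fieldOp_mul_sub_sum_mul_fieldOp, sub_eq_zero]
      _ ↔ X - X ∘ Dart.symm = 0 ∧ (0 : V → ℝ) = 0 := dartForm_eq_zero_iff _ _
      _ ↔ _ := by simp [funext_iff, sub_eq_zero, eq_comm]
  · calc _ ↔ ∀ φ ψ, dartForm G (X + X ∘ Dart.symm) ((-2 : ℝ) • outSum G X) φ ψ = 0 := by
          simp_rw [← sum_fieldOp_mul_add_sum_mul_fieldOp, eq_neg_iff_add_eq_zero]
      _ ↔ X + X ∘ Dart.symm = 0 ∧ (-2 : ℝ) • outSum G X = 0 := dartForm_eq_zero_iff _ _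
      _ ↔ _ := by
        have h_anti : X + X ∘ Dart.symm = 0 ↔ ∀ u, X u.symm = -X u := by
          simp [funext_iff, add_eq_zero_iff_eq_neg', eq_comm]
        rw [h_anti]
        exact and_congr_right fun hX => by rw [divergence_eq_neg_two_smul_outSum hX]
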